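/- For any bicomplex w, the fourth power of the real modulus satisfies |w|₁⁴ = w·w^†1·w^†2·w^†3; in particular w·w^†1·w^†2·w^†3 is a nonnegative real number. -/

import Mathlib

/-- Bicomplex numbers `T = {z₁ + z₂·i₂ : z₁, z₂ ∈ ℂ(i₁)}`,
represented by their two `ℂ(i₁)`-components. -/
@[ext]
structure Bicomplex where
  z1 : ℂ
  z2 : ℂ

namespace Bicomplex

instance : Zero Bicomplex := ⟨⟨0, 0⟩⟩
instance : One Bicomplex := ⟨⟨1, 0⟩⟩
instance : Add Bicomplex := ⟨fun a b => ⟨a.z1 + b.z1, a.z2 + b.z2⟩⟩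
instance : Neg Bicomplex := ⟨fun a => ⟨-a.z1, -a.z2⟩⟩
instance : Mul Bicomplex :=
  ⟨fun a b => ⟨a.z1 * b.z1 - a.z2 * b.z2, a.z1 * b.z2 + a.z2 * b.z1⟩⟩

@[simp] theorem zero_z1 : (0 : Bicomplex).z1 = 0 := rfl
@[simp] theorem zero_z2 : (0 : Bicomplex).z2 = 0 := rfl
@[simp] theorem one_z1 : (1 : Bicomplex).z1 = 1 := rfl
@[simp] theorem one_z2 : (1 : Bicomplex).z2 = 0 := rfl
@[simp] theorem add_z1 (a b : Bicomplex) : (a + b).z1 = a.z1 + b.z1 := rfl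
@[simp] theorem add_z2 (a b : Bicomplex) : (a + b).z2 = a.z2 + b.z2 := rfl
@[simp] theorem neg_z1 (a : Bicomplex) : (-a).z1 = -a.z1 := rfl
@[simp] theorem neg_z2 (a : Bicomplex) : (-a).z2 = -a.z2 := rfl
@[simp] theorem mul_z1 (a b : Bicomplex) :
    (a * b).z1 = a.z1 * b.z1 - a.z2 * b.z2 := rfl
@[simp] theorem mul_z2 (a b : Bicomplex) :
    (a * b).z2 = a.z1 * b.z2 + a.z2 * b.z1 := rfl

instance : CommRing Bicomplex where
  add_assoc a b c := by ext <;> simp <;> ring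
  zero_add a := by ext <;> simp
  add_zero a := by ext <;> simp
  add_comm a b := by ext <;> simp <;> ring
  neg_add_cancel a := by ext <;> simp
  mul_assoc a b c := by ext <;> simp <;> ring
  one_mul a := by ext <;> simp
  mul_one a := by ext <;> simp
  left_distrib a b c := by ext <;> simp <;> ring
  right_distrib a b c := by ext <;> simp <;> ring
  mul_comm a b := by ext <;> simp <;> ring
  zero_mul a := by ext <;> simp
  mul_zero a := by ext <;> simp
  nsmul := nsmulRec
  zsmul := zsmulRec

/-- The imaginary unit `i₁`. -/
def i1 : Bicomplex := ⟨Complex.I, 0⟩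
/-- The imaginary unit `i₂`. -/
def i2 : Bicomplex := ⟨0, 1⟩
/-- The hyperbolic unit `j = i₁·i₂`. -/
def jj : Bicomplex := ⟨0, Complex.I⟩

/-- Embedding of `ℂ(i₁)` into the bicomplex numbers. -/
def ofC : ℂ →+* Bicomplex where
  toFun z := ⟨z, 0⟩
  map_one' := rfl
  map_mul' a b := by ext <;> simp
  map_zero' := rfl
  map_add' a b := by ext <;> simp

/-- Embedding of `ℝ` into the bicomplex numbers. -/
noncomputable def ofR : ℝ →+* Bicomplex := ofC.comp (algebraMap ℝ ℂ)

@[simp] theorem ofC_z1 (z : ℂ) : (ofC z).z1 = z := rfl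
@[simp] theorem ofC_z2 (z : ℂ) : (ofC z).z2 = 0 := rfl

/-- The first bicomplex conjugation: `(z₁ + z₂·i₂)^†₁ = conj z₁ + conj z₂ · i₂`. -/
def dag1 (w : Bicomplex) : Bicomplex :=
  ⟨(starRingEnd ℂ) w.z1, (starRingEnd ℂ) w.z2⟩

/-- The second bicomplex conjugation: `(z₁ + z₂·i₂)^†₂ = z₁ - z₂·i₂`. -/
def dag2 (w : Bicomplex) : Bicomplex := ⟨w.z1, -w.z2⟩

/-- The third bicomplex conjugation: `(z₁ + z₂·i₂)^†₃ = conj z₁ - conj z₂ · i₂`. -/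
def dag3 (w : Bicomplex) : Bicomplex :=
  ⟨(starRingEnd ℂ) w.z1, -(starRingEnd ℂ) w.z2⟩

/-- The idempotent `e₁ = (1+j)/2`. -/
noncomputable def e1 : Bicomplex := ⟨(1:ℂ)/2, Complex.I/2⟩
/-- The idempotent `e₂ = (1-j)/2`. -/
noncomputable def e2 : Bicomplex := ⟨(1:ℂ)/2, -(Complex.I/2)⟩

end Bicomplex

namespace Bicomplex

theorem dag2_dag1 (w : Bicomplex) : dag2 (dag1 w) = dag3 w := rfl

theorem ofR_eq_ofC (r : ℝ) : ofR r = ofC r := rfl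

theorem mul_dag2 (w : Bicomplex) : w * dag2 w = ofC (w.z1 ^ 2 + w.z2 ^ 2) := by
  ext <;> simp only [dag2, mul_z1, mul_z2, ofC_z1, ofC_z2] <;> ring

theorem dag1_mul_dag3 (w : Bicomplex) :
    dag1 w * dag3 w = ofC (starRingEnd ℂ (w.z1 ^ 2 + w.z2 ^ 2)) := by
  rw [← dag2_dag1, mul_dag2, map_add (starRingEnd ℂ), map_pow, map_pow]
  rfl

theorem mul_dag1_mul_dag2_mul_dag3 (w : Bicomplex) :
    w * dag1 w * dag2 w * dag3 w = ofR (Complex.normSq (w.z1 ^ 2 + w.z2 ^ 2)) := by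
  rw [mul_right_comm w, mul_assoc, mul_dag2, dag1_mul_dag3, ← map_mul, Complex.mul_conj,
    ofR_eq_ofC]

end Bicomplex

theorem Real.sqrt_pow_four {x : ℝ} (hx : 0 ≤ x) : √x ^ 4 = x ^ 2 := by
  rw [show 4 = 2 * 2 from rfl, pow_mul, Real.sq_sqrt hx]

open Bicomplex in
/-- For any bicomplex `w`, `|w|₁⁴ = w·w^†₁·w^†₂·w^†₃`; in particular this
product is a nonnegative real number. -/
theorem real_modulus_pow_four (w : Bicomplex) :
    ofR (Real.sqrt (‖w.z1 ^ 2 + w.z2 ^ 2‖) ^ 4) =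
      w * dag1 w * dag2 w * dag3 w ∧
    ∃ r : ℝ, 0 ≤ r ∧ w * dag1 w * dag2 w * dag3 w = ofR r := by
  rw [mul_dag1_mul_dag2_mul_dag3, Real.sqrt_pow_four (norm_nonneg _), Complex.sq_norm]
  exact ⟨rfl, _, Complex.normSq_nonneg _, rfl⟩
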